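/- Let $A, B$ be positive semidefinite operators that are rank one, written $A = p_1 |\psi_1\rangle\langle\psi_1|$ and $B = p_2 |\psi_2\rangle\langle\psi_2|$ with $p_1, p_2 > 0$ and unit vectors $\psi_1, \psi_2$. Then $\frac{p_1 p_2}{p_1+p_2} |\langle\psi_1,\psi_2\rangle|^2 \le \frac{1}{2}\operatorname{Tr}(A+B) - \frac{1}{2}\|A-B\|_1 \le \frac{2 p_1 p_2}{p_1+p_2} |\langle\psi_1,\psi_2\rangle|^2$. -/

import Mathlib

open Matrix
open scoped ComplexOrder

noncomputable def matAbs {m : ℕ} (A : Matrix (Fin m) (Fin m) ℂ) : Matrix (Fin m) (Fin m) ℂ :=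
  (Matrix.posSemidef_conjTranspose_mul_self A).1.eigenvectorUnitary.1 *
    diagonal ((↑) ∘ Real.sqrt ∘ (Matrix.posSemidef_conjTranspose_mul_self A).1.eigenvalues) *
    (star (Matrix.posSemidef_conjTranspose_mul_self A).1.eigenvectorUnitary : Matrix (Fin m) (Fin m) ℂ)

noncomputable def traceNorm {m : ℕ} (A : Matrix (Fin m) (Fin m) ℂ) : ℝ :=
  ((matAbs A).trace).re

open Classical in
noncomputable def psdSqrt {m : ℕ} (A : Matrix (Fin m) (Fin m) ℂ) : Matrix (Fin m) (Fin m) ℂ :=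
  if h : A.PosSemidef then h.1.eigenvectorUnitary.1 * diagonal ((↑) ∘ Real.sqrt ∘ h.1.eigenvalues) *
    (star h.1.eigenvectorUnitary : Matrix (Fin m) (Fin m) ℂ) else 0

noncomputable def fid {m : ℕ} (A B : Matrix (Fin m) (Fin m) ℂ) : ℝ :=
  traceNorm (psdSqrt A * psdSqrt B)

noncomputable def matPosPart {m : ℕ} (A : Matrix (Fin m) (Fin m) ℂ) : Matrix (Fin m) (Fin m) ℂ :=
  (2⁻¹ : ℂ) • (matAbs A + A)

noncomputable def matNegPart {m : ℕ} (A : Matrix (Fin m) (Fin m) ℂ) : Matrix (Fin m) (Fin m) ℂ :=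
  (2⁻¹ : ℂ) • (matAbs A - A)

/-!
Write `X = |ψ₁⟩⟨ψ₁|`, `Y = |ψ₂⟩⟨ψ₂|`, `c = |⟨ψ₁, ψ₂⟩|²` and `M = p₁ X - p₂ Y`. Using `X² = X`,
`Y² = Y`, `XYX = c X` and `YXY = c Y`, one finds `M (M - a) (M - b) = 0`, where `a ≥ 0 ≥ b` are
the roots of `x² - (p₁ - p₂) x - p₁ p₂ (1 - c)`. Since `|x| = (2x² - (a + b) x) / (a - b)` on
`{0, a, b}`, `|M|` is this polynomial in `M`, and taking traces gives
`‖M‖₁ = a - b = √((p₁ + p₂)² - 4 p₁ p₂ c)`. With `S = p₁ + p₂` this means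
`(S - ‖M‖₁) / 2 = 2 p₁ p₂ c / (S + ‖M‖₁)`, and `S ≤ S + ‖M‖₁ ≤ 2 S` gives both bounds.
-/

section
open scoped MatrixOrder

theorem matAbs_eq_cfcAbs {m : ℕ} (A : Matrix (Fin m) (Fin m) ℂ) : matAbs A = CFC.abs A := by
  have hA := Matrix.posSemidef_conjTranspose_mul_self A
  have h1 : matAbs A = hA.1.cfc Real.sqrt := by
    rw [Matrix.IsHermitian.cfc, Unitary.conjStarAlgAut_apply]; rfl
  rw [h1, ← hA.1.cfc_eq, CFC.abs, ← cfcₙ_eq_cfc (hf0 := by simp),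
    ← CFC.sqrt_eq_real_sqrt _ hA.nonneg, star_eq_conjTranspose]

theorem matAbs_eq_of_posSemidef_of_mul_self {m : ℕ} {A N : Matrix (Fin m) (Fin m) ℂ}
    (hN : N.PosSemidef) (h : N * N = Aᴴ * A) : matAbs A = N := by
  rw [matAbs_eq_cfcAbs]
  exact CFC.sqrt_unique h hN.nonneg

end

theorem Matrix.IsHermitian.eq_zero_of_mul_self_mul_self_eq_zero {n R : Type*} [Fintype n]
    [CommRing R] [StarRing R] [PartialOrder R] [StarOrderedRing R] [NoZeroDivisors R]
    {M : Matrix n n R} (hM : M.IsHermitian) (h : M * M * M = 0) : M = 0 := by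
  have hsq : (M * M)ᴴ * (M * M) = 0 := by
    rw [conjTranspose_mul, hM.eq, ← Matrix.mul_assoc, h, Matrix.zero_mul]
  rw [← conjTranspose_mul_self_eq_zero, hM.eq, ← conjTranspose_mul_self_eq_zero.mp hsq]

theorem Matrix.IsHermitian.posSemidef_of_mul_self_eq_smul {n : Type*} [Fintype n]
    {P : Matrix n n ℂ} (hP : P.IsHermitian) {k : ℝ} (hk : 0 ≤ k) (h : P * P = (k : ℂ) • P) :
    P.PosSemidef := by
  rcases hk.eq_or_lt with rfl | hk
  · have : Pᴴ * P = 0 := by rw [hP.eq, h]; simp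
    rw [conjTranspose_mul_self_eq_zero.mp this]
    exact .zero
  · have : P = ((k⁻¹ : ℝ) : ℂ) • (Pᴴ * P) := by
      rw [hP.eq, h, smul_smul, ← Complex.ofReal_mul, inv_mul_cancel₀ hk.ne', Complex.ofReal_one,
        one_smul]
    rw [this]
    exact (posSemidef_conjTranspose_mul_self P).smul (by positivity)

theorem mul_self_sub_smul_mul_mul_self_sub_smul_of_cubic {n R : Type*} [Fintype n] [CommRing R]
    {M : Matrix n n R} {s t : R} (hcubic : M * M * M = s • (M * M) - t • M) (x y : R) :
    (M * M - x • M) * (M * M - y • M) =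
      (s ^ 2 - t - (x + y) * s + x * y) • (M * M) + ((x + y) * t - s * t) • M := by
  have hM4 : M * M * (M * M) = (s ^ 2 - t) • (M * M) - (s * t) • M := by
    rw [← Matrix.mul_assoc, hcubic]
    simp only [sub_mul, smul_mul_assoc, hcubic]
    module
  simp only [sub_mul, mul_sub, smul_mul_assoc, mul_smul_comm, hM4, ← Matrix.mul_assoc, hcubic]
  module

theorem Matrix.IsHermitian.posSemidef_mul_self_sub_smul_of_cubic {n : Type*} [Fintype n]
    {M : Matrix n n ℂ} (hM : M.IsHermitian) {a b : ℝ} (hab : 0 ≤ a * (a - b))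
    (hcubic : M * M * M = ((a + b : ℝ) : ℂ) • (M * M) - ((a * b : ℝ) : ℂ) • M) :
    (M * M - (b : ℂ) • M).PosSemidef := by
  have hM2 : (M * M).IsHermitian := by
    simpa only [hM.eq] using isHermitian_conjTranspose_mul_self M
  refine (hM2.sub (hM.smul (Complex.conj_ofReal b))).posSemidef_of_mul_self_eq_smul hab ?_
  rw [mul_self_sub_smul_mul_mul_self_sub_smul_of_cubic hcubic]
  push_cast
  module

theorem matAbs_eq_of_cubic {m : ℕ} {M : Matrix (Fin m) (Fin m) ℂ} (hM : M.IsHermitian)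
    {a b : ℝ} (hb : b ≤ 0) (ha : 0 ≤ a)
    (hcubic : M * M * M = ((a + b : ℝ) : ℂ) • (M * M) - ((a * b : ℝ) : ℂ) • M) :
    matAbs M = (((a - b)⁻¹ : ℝ) : ℂ) • ((M * M - (b : ℂ) • M) + (M * M - (a : ℂ) • M)) := by
  rcases (hb.trans ha).eq_or_lt with hab | hab
  -- Here `M = 0`, and the right-hand side vanishes because `0⁻¹ = 0`.
  · obtain ⟨rfl, rfl⟩ : b = 0 ∧ a = 0 := ⟨le_antisymm hb (hab ▸ ha), le_antisymm (hab ▸ hb) ha⟩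
    have hM0 : M = 0 := hM.eq_zero_of_mul_self_mul_self_eq_zero (by simpa using hcubic)
    subst hM0
    simpa using matAbs_eq_of_posSemidef_of_mul_self PosSemidef.zero (by simp)
  have hcubic' : M * M * M = ((b + a : ℝ) : ℂ) • (M * M) - ((b * a : ℝ) : ℂ) • M := by
    rwa [add_comm b, mul_comm b]
  have hP := hM.posSemidef_mul_self_sub_smul_of_cubic (by nlinarith) hcubic
  have hQ := hM.posSemidef_mul_self_sub_smul_of_cubic (by nlinarith) hcubic'
  have hsq : ((M * M - (b : ℂ) • M) + (M * M - (a : ℂ) • M)) *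
      ((M * M - (b : ℂ) • M) + (M * M - (a : ℂ) • M)) = (((a - b) ^ 2 : ℝ) : ℂ) • (M * M) := by
    simp only [add_mul, mul_add, mul_self_sub_smul_mul_mul_self_sub_smul_of_cubic hcubic]
    push_cast
    module
  refine matAbs_eq_of_posSemidef_of_mul_self ((hP.add hQ).smul ?_) ?_
  · exact_mod_cast (inv_pos.mpr (sub_pos.mpr hab)).le
  · rw [smul_mul_smul, hsq, smul_smul, hM.eq, ← Complex.ofReal_mul, ← Complex.ofReal_mul,
      show (a - b)⁻¹ * (a - b)⁻¹ * (a - b) ^ 2 = 1 by field_simp, Complex.ofReal_one, one_smul]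

theorem traceNorm_eq_of_cubic {m : ℕ} {M : Matrix (Fin m) (Fin m) ℂ} (hM : M.IsHermitian)
    {a b : ℝ} (hb : b ≤ 0) (ha : 0 ≤ a)
    (hcubic : M * M * M = ((a + b : ℝ) : ℂ) • (M * M) - ((a * b : ℝ) : ℂ) • M) :
    traceNorm M = (a - b)⁻¹ * (2 * (M * M).trace.re - (a + b) * M.trace.re) := by
  rw [traceNorm, matAbs_eq_of_cubic hM hb ha hcubic]
  simp only [trace_smul, trace_add, trace_sub, smul_eq_mul, Complex.re_ofReal_mul,
    Complex.sub_re, Complex.add_re]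
  ring

section RankOne

variable {n R : Type*} [Fintype n] [CommRing R] {u u' v v' : n → R} {p q : R} {M : Matrix n n R}

theorem smul_vecMulVec_sub_smul_vecMulVec_cube (hu : u' ⬝ᵥ u = 1) (hv : v' ⬝ᵥ v = 1)
    (hM : M = p • vecMulVec u u' - q • vecMulVec v v') :
    M * M * M = (p - q) • (M * M) - (p * q * ((u' ⬝ᵥ v) * (v' ⬝ᵥ u) - 1)) • M := by
  subst hM
  simp only [sub_mul, mul_sub, smul_mul_assoc, mul_smul_comm, vecMulVec_mul_vecMulVec,
    vecMulVec_smul, hu, hv, one_smul, smul_sub, smul_smul]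
  module

theorem trace_smul_vecMulVec_sub_smul_vecMulVec (hu : u' ⬝ᵥ u = 1) (hv : v' ⬝ᵥ v = 1)
    (hM : M = p • vecMulVec u u' - q • vecMulVec v v') : M.trace = p - q := by
  simp [hM, dotProduct_comm u, dotProduct_comm v, hu, hv]

theorem trace_mul_self_smul_vecMulVec_sub_smul_vecMulVec (hu : u' ⬝ᵥ u = 1) (hv : v' ⬝ᵥ v = 1)
    (hM : M = p • vecMulVec u u' - q • vecMulVec v v') :
    (M * M).trace = p ^ 2 + q ^ 2 - 2 * p * q * ((u' ⬝ᵥ v) * (v' ⬝ᵥ u)) := by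
  subst hM
  simp only [sub_mul, mul_sub, smul_mul_assoc, mul_smul_comm, vecMulVec_mul_vecMulVec,
    vecMulVec_smul, hu, hv, one_smul, trace_sub, trace_smul, trace_vecMulVec, smul_eq_mul]
  rw [dotProduct_comm u u', dotProduct_comm v v', dotProduct_comm u v', dotProduct_comm v u',
    hu, hv]
  ring

end RankOne

theorem star_dotProduct_self_eq_sum_normSq {n : Type*} [Fintype n] (v : n → ℂ) :
    star v ⬝ᵥ v = ((∑ i, Complex.normSq (v i) : ℝ) : ℂ) := by
  simp [dotProduct, Complex.normSq_eq_conj_mul_self]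

theorem star_dotProduct_mul_star_dotProduct {n : Type*} [Fintype n] (u v : n → ℂ) :
    (star u ⬝ᵥ v) * (star v ⬝ᵥ u) = Complex.normSq (star u ⬝ᵥ v) := by
  rw [star_dotProduct v, Complex.star_def, Complex.mul_conj]

theorem normSq_star_dotProduct_le {n : Type*} [Fintype n] (u v : n → ℂ) :
    Complex.normSq (star u ⬝ᵥ v) ≤ (star u ⬝ᵥ u).re * (star v ⬝ᵥ v).re := by
  have h := inner_mul_inner_self_le (𝕜 := ℂ) (WithLp.toLp 2 u) (WithLp.toLp 2 v)
  simp only [EuclideanSpace.inner_toLp_toLp] at h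
  rwa [dotProduct_comm v (star u), dotProduct_comm u (star v), dotProduct_comm u (star u),
    dotProduct_comm v (star v), ← Complex.norm_mul, star_dotProduct_mul_star_dotProduct,
    Complex.norm_real, Real.norm_of_nonneg (Complex.normSq_nonneg _)] at h

theorem normSq_star_dotProduct_le_one {n : Type*} [Fintype n] {u v : n → ℂ}
    (hu : star u ⬝ᵥ u = 1) (hv : star v ⬝ᵥ v = 1) : Complex.normSq (star u ⬝ᵥ v) ≤ 1 := by
  simpa [hu, hv] using normSq_star_dotProduct_le u v

theorem traceNorm_smul_vecMulVec_sub_smul_vecMulVec {d : ℕ} {p₁ p₂ : ℝ} (hp₁ : 0 ≤ p₁)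
    (hp₂ : 0 ≤ p₂) {ψ₁ ψ₂ : Fin d → ℂ} (hψ₁ : star ψ₁ ⬝ᵥ ψ₁ = 1) (hψ₂ : star ψ₂ ⬝ᵥ ψ₂ = 1) :
    traceNorm ((p₁ : ℂ) • vecMulVec ψ₁ (star ψ₁) - (p₂ : ℂ) • vecMulVec ψ₂ (star ψ₂)) =
      √((p₁ + p₂) ^ 2 - 4 * p₁ * p₂ * Complex.normSq (star ψ₁ ⬝ᵥ ψ₂)) := by
  set M := (p₁ : ℂ) • vecMulVec ψ₁ (star ψ₁) - (p₂ : ℂ) • vecMulVec ψ₂ (star ψ₂) with hM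
  set c := Complex.normSq (star ψ₁ ⬝ᵥ ψ₂)
  have hc : (star ψ₁ ⬝ᵥ ψ₂) * (star ψ₂ ⬝ᵥ ψ₁) = (c : ℂ) :=
    star_dotProduct_mul_star_dotProduct ψ₁ ψ₂
  have hc1 : c ≤ 1 := normSq_star_dotProduct_le_one hψ₁ hψ₂
  set l := √((p₁ + p₂) ^ 2 - 4 * p₁ * p₂ * c)
  have hl : l ^ 2 = (p₁ + p₂) ^ 2 - 4 * p₁ * p₂ * c :=
    Real.sq_sqrt (by nlinarith [mul_nonneg hp₁ hp₂, sq_nonneg (p₁ - p₂)])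
  have hdiff : |p₁ - p₂| ≤ l := Real.abs_le_sqrt (by nlinarith [mul_nonneg hp₁ hp₂])
  set a := (p₁ - p₂ + l) / 2
  set b := (p₁ - p₂ - l) / 2
  have hsum : a + b = p₁ - p₂ := by ring
  have hsub : a - b = l := by ring
  have hprod : a * b = p₁ * p₂ * (c - 1) := by linear_combination (-1 / 4 : ℝ) * hl
  have hHerm : M.IsHermitian := by
    simp [hM, IsHermitian, conjTranspose_sub, conjTranspose_smul]
  have hcubic : M * M * M = ((a + b : ℝ) : ℂ) • (M * M) - ((a * b : ℝ) : ℂ) • M := by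
    rw [hsum, hprod, smul_vecMulVec_sub_smul_vecMulVec_cube hψ₁ hψ₂ hM, hc]
    push_cast
    rfl
  rw [traceNorm_eq_of_cubic hHerm (by linarith [le_abs_self (p₁ - p₂)])
    (by linarith [neg_abs_le (p₁ - p₂)]) hcubic,
    trace_mul_self_smul_vecMulVec_sub_smul_vecMulVec hψ₁ hψ₂ hM,
    trace_smul_vecMulVec_sub_smul_vecMulVec hψ₁ hψ₂ hM, hc, hsum, hsub]
  norm_cast
  rw [show 2 * (p₁ ^ 2 + p₂ ^ 2 - 2 * p₁ * p₂ * c) - (p₁ - p₂) * (p₁ - p₂) = l * l by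
    linear_combination -hl, ← mul_assoc, inv_mul_mul_self]

theorem half_sub_sqrt_sq_sub_four_mul_mem_Icc {S x : ℝ} (hS : 0 < S) (hx : 0 ≤ x)
    (hxS : 4 * x ≤ S ^ 2) : (S - √(S ^ 2 - 4 * x)) / 2 ∈ Set.Icc (x / S) (2 * x / S) := by
  set l := √(S ^ 2 - 4 * x)
  have hl : l ^ 2 = S ^ 2 - 4 * x := Real.sq_sqrt (by linarith)
  have hl0 : 0 ≤ l := Real.sqrt_nonneg _
  have hlS : l ≤ S := (Real.sqrt_le_left hS.le).mpr (by linarith)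
  constructor
  · rw [div_le_iff₀ hS]
    nlinarith [sq_nonneg (S - l)]
  · rw [le_div_iff₀ hS]
    nlinarith [mul_nonneg hl0 (sub_nonneg.mpr hlS)]

theorem pure_state_error_bounds {d : ℕ} (p₁ p₂ : ℝ) (hp₁ : 0 < p₁) (hp₂ : 0 < p₂)
    (ψ₁ ψ₂ : Fin d → ℂ)
    (hψ₁ : ∑ i, Complex.normSq (ψ₁ i) = 1) (hψ₂ : ∑ i, Complex.normSq (ψ₂ i) = 1) :
    p₁ * p₂ / (p₁ + p₂) * Complex.normSq (∑ i, (starRingEnd ℂ) (ψ₁ i) * ψ₂ i) ≤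
      (1/2) * ((((p₁ : ℂ) • vecMulVec ψ₁ (star ψ₁) +
          (p₂ : ℂ) • vecMulVec ψ₂ (star ψ₂)).trace).re) -
        (1/2) * traceNorm ((p₁ : ℂ) • vecMulVec ψ₁ (star ψ₁) -
          (p₂ : ℂ) • vecMulVec ψ₂ (star ψ₂)) ∧
    (1/2) * ((((p₁ : ℂ) • vecMulVec ψ₁ (star ψ₁) +
          (p₂ : ℂ) • vecMulVec ψ₂ (star ψ₂)).trace).re) -
        (1/2) * traceNorm ((p₁ : ℂ) • vecMulVec ψ₁ (star ψ₁) -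
          (p₂ : ℂ) • vecMulVec ψ₂ (star ψ₂)) ≤
      2 * p₁ * p₂ / (p₁ + p₂) * Complex.normSq (∑ i, (starRingEnd ℂ) (ψ₁ i) * ψ₂ i) := by
  have hu₁ : star ψ₁ ⬝ᵥ ψ₁ = 1 := by
    rw [star_dotProduct_self_eq_sum_normSq, hψ₁, Complex.ofReal_one]
  have hu₂ : star ψ₂ ⬝ᵥ ψ₂ = 1 := by
    rw [star_dotProduct_self_eq_sum_normSq, hψ₂, Complex.ofReal_one]
  have htrace : (((p₁ : ℂ) • vecMulVec ψ₁ (star ψ₁) +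
      (p₂ : ℂ) • vecMulVec ψ₂ (star ψ₂)).trace).re = p₁ + p₂ := by
    simp [dotProduct_comm ψ₁, dotProduct_comm ψ₂, hu₁, hu₂]
  have hdot : ∑ i, (starRingEnd ℂ) (ψ₁ i) * ψ₂ i = star ψ₁ ⬝ᵥ ψ₂ := rfl
  rw [htrace, traceNorm_smul_vecMulVec_sub_smul_vecMulVec hp₁.le hp₂.le hu₁ hu₂, hdot]
  have hc1 := normSq_star_dotProduct_le_one hu₁ hu₂
  obtain ⟨hlower, hupper⟩ := half_sub_sqrt_sq_sub_four_mul_mem_Icc (add_pos hp₁ hp₂)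
    (mul_nonneg (mul_pos hp₁ hp₂).le (Complex.normSq_nonneg _))
    (by nlinarith [sq_nonneg (p₁ - p₂), mul_pos hp₁ hp₂])
  exact ⟨(Eq.trans_le (by ring) hlower).trans_eq (by ring_nf),
    (Eq.trans_le (by ring_nf) hupper).trans_eq (by ring)⟩
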